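/- Let K ⊆ ℝ^n × ℝ^m be nonempty and compact and q ∈ ℝ^m, and define U = {(x,θ) ∈ ℝ^n × ℝ : ∃y, (x,y) ∈ convexHull(K) and θ ≥ q·y}. If (x̄,θ̄) ∈ ℝ^n × ℝ satisfies π·x̄ + π₀θ̄ ≥ inf{π·x' + π₀(q·y') : (x',y') ∈ K} for every (π,π₀) ∈ ℝ^n × ℝ with π₀ ≥ 0, then (x̄,θ̄) ∈ U. -/

import Mathlib

/-!
The set `U` is the Minkowski sum of the image of `conv K` under `(x, y) ↦ (x, q ⬝ y)`, which is
compact and convex (Carathéodory), and the closed ray `{0} × [0, ∞)`; so it is closed and convex.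
A point outside `U` is strictly separated from it by a hyperplane `π ⬝ x + π₀ θ = u`; since `U` is
closed upwards in `θ`, `π₀ ≥ 0`, and the resulting cut `(π, π₀)` is violated at `(x̄, θ̄)`.
-/

open Set Module

section ConvexHull

variable {E : Type*} [AddCommGroup E] [Module ℝ E]

/-- By Carathéodory, `finrank ℝ E + 1` points suffice; shorter combinations are padded with
zero weights. -/
theorem convexHull_eq_image_stdSimplex_prod_pi [FiniteDimensional ℝ E] {s : Set E}
    (hs : s.Nonempty) :
    convexHull ℝ s =
      (fun p : (Fin (finrank ℝ E + 1) → ℝ) × (Fin (finrank ℝ E + 1) → E) => ∑ i, p.1 i • p.2 i) ''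
        (stdSimplex ℝ _ ×ˢ univ.pi fun _ => s) := by
  refine Subset.antisymm (fun x hx => ?_) ?_
  · obtain ⟨a, ha⟩ := hs
    obtain ⟨ι, _, z, w, hzs, hz, hw0, hw1, hwz⟩ := eq_pos_convex_span_of_mem_convexHull hx
    have hcard : Fintype.card ι ≤ Fintype.card (Fin (finrank ℝ E + 1)) := by
      simpa using hz.card_le_finrank_succ.trans (Nat.succ_le_succ (Submodule.finrank_le _))
    obtain ⟨e⟩ := Function.Embedding.nonempty_of_card_le hcard
    have he := e.injective
    have hw_out : ∀ j ∉ range e, Function.extend e w 0 j = 0 := fun j hj =>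
      Function.extend_apply' _ _ _ hj
    refine ⟨(Function.extend e w 0, Function.extend e z fun _ => a),
      ⟨⟨fun j => ?_, ?_⟩, fun j _ => ?_⟩, ?_⟩
    · by_cases hj : j ∈ range e
      · obtain ⟨i, rfl⟩ := hj
        simpa [he.extend_apply] using (hw0 i).le
      · simp [hw_out j hj]
    · rw [← hw1]
      exact (Fintype.sum_of_injective e he _ _ hw_out fun i => by simp [he.extend_apply]).symm
    · by_cases hj : j ∈ range e
      · obtain ⟨i, rfl⟩ := hj
        simpa [he.extend_apply] using hzs (mem_range_self i)
      · simpa [Function.extend_apply' _ _ _ hj] using ha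
    · rw [← hwz]
      exact (Fintype.sum_of_injective e he _ _ (fun j hj => by simp [hw_out j hj])
        fun i => by simp [he.extend_apply]).symm
  · rintro _ ⟨⟨w, z⟩, ⟨⟨hw0, hw1⟩, hz⟩, rfl⟩
    exact (convex_convexHull ℝ s).sum_mem (fun i _ => hw0 i) hw1
      fun i _ => subset_convexHull ℝ s (hz i (mem_univ i))

theorem IsCompact.convexHull [TopologicalSpace E] [IsTopologicalAddGroup E] [ContinuousSMul ℝ E]
    [FiniteDimensional ℝ E] {s : Set E} (hs : IsCompact s) : IsCompact (convexHull ℝ s) := by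
  rcases s.eq_empty_or_nonempty with rfl | hne
  · simp
  rw [convexHull_eq_image_stdSimplex_prod_pi hne]
  exact ((isCompact_stdSimplex ℝ _).prod (isCompact_univ_pi fun _ => hs)).image <| by fun_prop

end ConvexHull

section ValueEpigraph

variable {E F : Type*}

/-- The epigraph of `x ↦ inf {g y | (x, y) ∈ C}`; for `C = conv K` and `g = q ⬝ ·` it is the
paper's `U`. -/
def valueEpigraph (C : Set (E × F)) (g : F → ℝ) : Set (E × ℝ) :=
  {p | ∃ y, (p.1, y) ∈ C ∧ g y ≤ p.2}

open Pointwise in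
theorem valueEpigraph_eq_image_add [AddCommGroup E] (C : Set (E × F)) (g : F → ℝ) :
    valueEpigraph C g = Prod.map id g '' C + ({0} ×ˢ Ici 0) := by
  ext ⟨x, θ⟩
  constructor
  · rintro ⟨y, hy, hθ⟩
    exact ⟨(x, g y), ⟨(x, y), hy, rfl⟩, (0, θ - g y), ⟨rfl, sub_nonneg.2 hθ⟩, by simp⟩
  · rintro ⟨_, ⟨⟨x', y⟩, hy, rfl⟩, ⟨_, t⟩, ⟨rfl, ht⟩, h⟩
    simp only [Prod.map, id, Prod.mk_add_mk, add_zero, Prod.mk.injEq] at h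
    obtain ⟨rfl, rfl⟩ := h
    exact ⟨y, hy, le_add_of_nonneg_right ht⟩

theorem Convex.valueEpigraph [AddCommGroup E] [Module ℝ E] [AddCommGroup F] [Module ℝ F]
    {C : Set (E × F)} (hC : Convex ℝ C) (g : F →ₗ[ℝ] ℝ) : Convex ℝ (valueEpigraph C g) := by
  rw [valueEpigraph_eq_image_add]
  exact (hC.linear_image (LinearMap.id.prodMap g)).add ((convex_singleton 0).prod (convex_Ici 0))

theorem IsCompact.isClosed_valueEpigraph [AddCommGroup E] [TopologicalSpace E]
    [IsTopologicalAddGroup E] [T1Space E] [TopologicalSpace F] {C : Set (E × F)}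
    (hC : IsCompact C) {g : F → ℝ} (hg : Continuous g) : IsClosed (valueEpigraph C g) := by
  rw [valueEpigraph_eq_image_add]
  exact (isClosed_singleton.prod isClosed_Ici).add_left_of_isCompact
    (hC.image (continuous_id.prodMap hg))

end ValueEpigraph

theorem nonneg_of_forall_lt_add_mul {a b u : ℝ} (h : ∀ t, 0 ≤ t → u < a + t * b) : 0 ≤ b := by
  by_contra! hb
  have := h (|a - u| / -b) (div_nonneg (abs_nonneg _) (neg_nonneg.2 hb.le))
  rw [div_mul_eq_mul_div, div_neg, mul_div_cancel_right₀ _ hb.ne] at this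
  linarith [le_abs_self (a - u)]

theorem exists_cut_of_notMem_valueEpigraph {E F : Type*} [AddCommGroup E] [TopologicalSpace E]
    [IsTopologicalAddGroup E] [Module ℝ E] [ContinuousSMul ℝ E] [LocallyConvexSpace ℝ E]
    [T1Space E] [AddCommGroup F] [TopologicalSpace F] [Module ℝ F] {C : Set (E × F)}
    (hC : IsCompact C) (hCc : Convex ℝ C) (hne : C.Nonempty) (g : F →L[ℝ] ℝ) {x : E} {θ : ℝ}
    (h : (x, θ) ∉ valueEpigraph C g) :
    ∃ (φ : StrongDual ℝ E) (π₀ u : ℝ), 0 ≤ π₀ ∧ φ x + π₀ * θ < u ∧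
      ∀ p ∈ C, u < φ p.1 + π₀ * g p.2 := by
  obtain ⟨f, u, hfx, hfU⟩ := geometric_hahn_banach_point_closed
    (hCc.valueEpigraph (g : F →ₗ[ℝ] ℝ)) (hC.isClosed_valueEpigraph g.continuous) h
  have hf : ∀ x θ, f (x, θ) = f (x, 0) + θ * f (0, 1) := fun x θ => by
    rw [← smul_eq_mul, ← map_smul, ← map_add, Prod.smul_mk, smul_zero, smul_eq_mul, mul_one,
      Prod.mk_add_mk, add_zero, zero_add]
  have hcut : ∀ p ∈ C, ∀ t, 0 ≤ t → u < f (p.1, 0) + (g p.2 + t) * f (0, 1) := fun p hp t ht => by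
    rw [← hf]
    exact hfU _ ⟨p.2, hp, le_add_of_nonneg_right ht⟩
  obtain ⟨p, hp⟩ := hne
  have hπ₀ : 0 ≤ f (0, 1) := nonneg_of_forall_lt_add_mul (u := u)
    (a := f (p.1, 0) + g p.2 * f (0, 1)) fun t ht => by linarith [hcut p hp t ht]
  refine ⟨f.comp (.inl ℝ E ℝ), f (0, 1), u, hπ₀, ?_, fun p hp => ?_⟩
  · simpa [hf x θ, mul_comm] using hfx
  · simpa [mul_comm] using hcut p hp 0 le_rfl

/-- Second inclusion in the proof of Theorem 3.2: any point satisfying all Lagrangian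
cuts lies in the convexified epigraph. -/
theorem stmt_16 {n m : ℕ} (K : Set ((Fin n → ℝ) × (Fin m → ℝ))) (hKne : K.Nonempty)
    (hKcpt : IsCompact K) (q : Fin m → ℝ) (xb : Fin n → ℝ) (θb : ℝ)
    (hcuts : ∀ (π : Fin n → ℝ) (π₀ : ℝ), 0 ≤ π₀ →
      (∑ i, π i * xb i) + π₀ * θb ≥
        sInf {r : ℝ | ∃ w ∈ K, r = (∑ i, π i * w.1 i) + π₀ * (∑ j, q j * w.2 j)}) :
    ∃ y : Fin m → ℝ, (xb, y) ∈ convexHull ℝ K ∧ θb ≥ ∑ j, q j * y j := by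
  let g : (Fin m → ℝ) →L[ℝ] ℝ := ∑ j, q j • ContinuousLinearMap.proj j
  have hg : ∀ y, g y = ∑ j, q j * y j := by simp [g]
  by_contra hU
  obtain ⟨φ, π₀, u, hπ₀, hxθ, hcut⟩ := exists_cut_of_notMem_valueEpigraph hKcpt.convexHull
    (convex_convexHull ℝ K) hKne.convexHull g (x := xb) (θ := θb)
    fun ⟨y, hy, hθ⟩ => hU ⟨y, hy, hg y ▸ hθ⟩
  let π : Fin n → ℝ := fun i => φ fun j => if i = j then 1 else 0
  have hφ : ∀ x, φ x = ∑ i, π i * x i := fun x => by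
    simpa [mul_comm] using LinearMap.pi_apply_eq_sum_univ (φ : (Fin n → ℝ) →ₗ[ℝ] ℝ) x
  obtain ⟨w, hw⟩ := hKne
  have hu : u ≤ sInf {r : ℝ | ∃ w ∈ K, r = (∑ i, π i * w.1 i) + π₀ * (∑ j, q j * w.2 j)} := by
    refine le_csInf ⟨_, w, hw, rfl⟩ ?_
    rintro _ ⟨w, hw, rfl⟩
    simpa [hφ, hg] using (hcut w (subset_convexHull ℝ K hw)).le
  linarith [hcuts π π₀ hπ₀, hφ xb]
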